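/- Let X ∼ Ber(p) be a Bernoulli random variable with parameter 0 < p < 1 (so P(X = 1) = p and P(X = 0) = 1 − p, viewed as a measure on ℝ with d = 1). Then V̄(P_X, 2) = (1/4)·min{p, 1 − p}. -/

import Mathlib

open MeasureTheory ProbabilityTheory ENNReal

noncomputable section

variable {d : ℕ} {𝒴 : Type*} [MeasurableSpace 𝒴]

/-- Law of `X - u` when `X ∼ P`, scalar case. -/
def shiftLaw1 (P : Measure ℝ) (u : ℝ) : Measure ℝ :=
  P.map (· - u)

/-- The mixture measure `μ_U = ∑_k P_{X-u_k}`, scalar case. -/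
def mixMeasure1 (P : Measure ℝ) {M : ℕ} (U : Fin M → ℝ) : Measure ℝ :=
  ∑ k : Fin M, shiftLaw1 P (U k)

/-- `H(P_X,t,M)` in the scalar case, where the constraint forces `u_k = kt`:
`∫ max_j (dP_{X−jt}/dμ_U) dμ_U`. -/
def Hfun1 (P : Measure ℝ) (M : ℕ) (t : ℝ) : ℝ≥0∞ :=
  ∫⁻ x, (⨆ j : Fin M,
      (shiftLaw1 P ((j : ℝ) * t)).rnDeriv (mixMeasure1 P fun k : Fin M => (k : ℝ) * t) x)
    ∂(mixMeasure1 P fun k : Fin M => (k : ℝ) * t)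

/-- High-noise Ziv–Zakai functional with valley-filling, scalar case. -/
def Vbar1 (P : Measure ℝ) (M : ℕ) : ℝ≥0∞ :=
  ∫⁻ t in Set.Ioi (0 : ℝ),
    ENNReal.ofReal (t / 2) *
      ⨆ (u : ℝ) (_ : t ≤ u), ((M : ℝ≥0∞) - Hfun1 P M u) / ((M : ℝ≥0∞) - 1)

/-! If `P` is carried by a finite set, so is `μ_U`, and at each atom `x` the density
`dP_{X-u}/dμ_U` is the ratio of masses; hence `H(P,t,M) = ∑_x max_j P{x + j t}`, summed over the
atoms of `μ_U`. For `M = 2`, `max a b = a + b - min a b` turns `2 - H` into the overlap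
`∑_x min (P{x}) (P{x + t})` of `P` with its shift. For `Ber(p)` and `t > 0` the atoms `{0, 1}` and
`{-t, 1 - t}` meet only when `t = 1`, so `2 - H` is `min(p, 1 - p)` at `t = 1` and `0` elsewhere;
valley-filling spreads this value over `(0, 1]`, and `∫₀¹ t/2 dt = 1/4`. -/

lemma iSup_fin_two {β : Type*} [CompleteLattice β] (f : Fin 2 → β) : ⨆ j, f j = f 0 ⊔ f 1 :=
  le_antisymm (iSup_le (Fin.forall_fin_two.2 ⟨le_sup_left, le_sup_right⟩))
    (sup_le (le_iSup f 0) (le_iSup f 1))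

namespace MeasureTheory

variable {α : Type*} [MeasurableSpace α]

lemma Measure.absolutelyContinuous_finsetSum {ι : Type*} (s : Finset ι) (ν : ι → Measure α)
    {i : ι} (hi : i ∈ s) : ν i ≪ ∑ j ∈ s, ν j :=
  Measure.AbsolutelyContinuous.mk fun t _ ht => by
    rw [Measure.finsetSum_apply, Finset.sum_eq_zero_iff] at ht
    exact ht i hi

variable [MeasurableSingletonClass α]

lemma Measure.rnDeriv_mul_measure_singleton {ν μ : Measure α} [ν.HaveLebesgueDecomposition μ]
    [SFinite μ] (hνμ : ν ≪ μ) (x : α) : ν.rnDeriv μ x * μ {x} = ν {x} := by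
  rw [← lintegral_singleton, Measure.setLIntegral_rnDeriv hνμ]

lemma lintegral_eq_sum_of_measure_compl_eq_zero {μ : Measure α} {S : Finset α}
    (hS : μ (↑S)ᶜ = 0) (f : α → ℝ≥0∞) : ∫⁻ x, f x ∂μ = ∑ x ∈ S, f x * μ {x} := by
  rw [← lintegral_finset, Measure.restrict_eq_self_of_ae_mem (ae_iff.2 hS)]

theorem lintegral_iSup_rnDeriv_finsetSum {ι : Type*} [Fintype ι] (ν : ι → Measure α)
    [∀ i, IsFiniteMeasure (ν i)] {S : Finset α} (hS : (∑ i, ν i) (↑S)ᶜ = 0) :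
    ∫⁻ x, ⨆ i, (ν i).rnDeriv (∑ j, ν j) x ∂(∑ j, ν j) = ∑ x ∈ S, ⨆ i, ν i {x} := by
  rw [lintegral_eq_sum_of_measure_compl_eq_zero hS]
  refine Finset.sum_congr rfl fun x _ => ?_
  rw [ENNReal.iSup_mul]
  exact iSup_congr fun i => Measure.rnDeriv_mul_measure_singleton
    (Measure.absolutelyContinuous_finsetSum _ ν (Finset.mem_univ i)) x

end MeasureTheory

instance (P : Measure ℝ) [IsFiniteMeasure P] (u : ℝ) : IsFiniteMeasure (shiftLaw1 P u) :=
  Measure.isFiniteMeasure_map P _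

instance (P : Measure ℝ) [IsProbabilityMeasure P] (u : ℝ) : IsProbabilityMeasure (shiftLaw1 P u) :=
  Measure.isProbabilityMeasure_map (measurable_sub_const u).aemeasurable

lemma shiftLaw1_singleton (P : Measure ℝ) (u x : ℝ) : shiftLaw1 P u {x} = P {x + u} := by
  rw [shiftLaw1, Measure.map_apply (measurable_sub_const u) (measurableSet_singleton x)]
  congr 1
  ext y
  simp [sub_eq_iff_eq_add]

lemma shiftLaw1_compl_eq_zero {P : Measure ℝ} {T S : Finset ℝ} (hT : P (↑T)ᶜ = 0) {u : ℝ}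
    (hS : T.image (· - u) ⊆ S) : shiftLaw1 P u (↑S)ᶜ = 0 := by
  rw [shiftLaw1, Measure.map_apply (measurable_sub_const u) (S.measurableSet.compl)]
  refine measure_mono_null (fun y hy => ?_) hT
  exact fun hyT => hy (hS (Finset.mem_image_of_mem (· - u) hyT))

def shiftedSupport (T : Finset ℝ) {M : ℕ} (U : Fin M → ℝ) : Finset ℝ :=
  Finset.univ.biUnion fun k => T.image (· - U k)

lemma shiftLaw1_shiftedSupport_compl {P : Measure ℝ} {T : Finset ℝ} (hT : P (↑T)ᶜ = 0) {M : ℕ}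
    (U : Fin M → ℝ) (k : Fin M) : shiftLaw1 P (U k) (↑(shiftedSupport T U))ᶜ = 0 :=
  shiftLaw1_compl_eq_zero hT
    (Finset.subset_biUnion_of_mem (fun k => T.image (· - U k)) (Finset.mem_univ k))

lemma mixMeasure1_shiftedSupport_compl {P : Measure ℝ} {T : Finset ℝ} (hT : P (↑T)ᶜ = 0)
    {M : ℕ} (U : Fin M → ℝ) : mixMeasure1 P U (↑(shiftedSupport T U))ᶜ = 0 := by
  rw [mixMeasure1, Measure.finsetSum_apply]
  exact Finset.sum_eq_zero fun k _ => shiftLaw1_shiftedSupport_compl hT U k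

theorem Hfun1_eq_sum (P : Measure ℝ) [IsFiniteMeasure P] {T : Finset ℝ} (hT : P (↑T)ᶜ = 0)
    (M : ℕ) (t : ℝ) :
    Hfun1 P M t = ∑ x ∈ shiftedSupport T (fun k : Fin M => (k : ℝ) * t),
      ⨆ j : Fin M, P {x + j * t} := by
  simp only [← shiftLaw1_singleton]
  exact lintegral_iSup_rnDeriv_finsetSum _ (mixMeasure1_shiftedSupport_compl hT _)

theorem two_sub_Hfun1_eq_sum_min (P : Measure ℝ) [IsProbabilityMeasure P] {T : Finset ℝ}
    (hT : P (↑T)ᶜ = 0) (t : ℝ) :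
    2 - Hfun1 P 2 t = ∑ x ∈ shiftedSupport T (fun k : Fin 2 => (k : ℝ) * t),
      min (P {x}) (P {x + t}) := by
  set S := shiftedSupport T (fun k : Fin 2 => (k : ℝ) * t)
  have hmass (j : Fin 2) : ∑ x ∈ S, P {x + j * t} = 1 := by
    simp only [← shiftLaw1_singleton, sum_measure_singleton]
    exact (prob_compl_eq_zero_iff S.measurableSet).1
      (shiftLaw1_shiftedSupport_compl hT (fun k : Fin 2 => (k : ℝ) * t) j)
  have hmax : Hfun1 P 2 t = ∑ x ∈ S, max (P {x}) (P {x + t}) := by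
    simpa [iSup_fin_two] using Hfun1_eq_sum P hT 2 t
  have hmin_add_max : (∑ x ∈ S, min (P {x}) (P {x + t})) + Hfun1 P 2 t = 2 := by
    rw [hmax, ← Finset.sum_add_distrib]
    simp only [min_add_max, Finset.sum_add_distrib]
    simpa [one_add_one_eq_two] using congrArg₂ (· + ·) (hmass 0) (hmass 1)
  refine ENNReal.sub_eq_of_eq_add ?_ hmin_add_max.symm
  exact ne_top_of_le_ne_top ofNat_ne_top (hmin_add_max ▸ le_add_self)

section TwoPoint

variable (a b : ℝ≥0∞)

lemma twoPoint_singleton (x : ℝ) :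
    (a • Measure.dirac 0 + b • Measure.dirac 1 : Measure ℝ) {x} =
      (if x = 0 then a else 0) + (if x = 1 then b else 0) := by
  simp [Set.indicator_apply, eq_comm]

lemma twoPoint_compl_eq_zero :
    (a • Measure.dirac 0 + b • Measure.dirac 1 : Measure ℝ) (↑({0, 1} : Finset ℝ))ᶜ = 0 := by
  simp

lemma twoPoint_sum_min_shift {t : ℝ} (ht : 0 < t) :
    ∑ x ∈ shiftedSupport {0, 1} (fun k : Fin 2 => (k : ℝ) * t),
      min ((a • Measure.dirac 0 + b • Measure.dirac 1 : Measure ℝ) {x})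
        ((a • Measure.dirac 0 + b • Measure.dirac 1 : Measure ℝ) {x + t}) =
      ({1} : Set ℝ).indicator (fun _ => min a b) t := by
  have h0 : (0 : ℝ) ∈ shiftedSupport {0, 1} (fun k : Fin 2 => (k : ℝ) * t) := by
    simp [shiftedSupport]
  rw [Finset.sum_eq_single_of_mem 0 h0 fun x _ hx => ?_]
  · simp only [twoPoint_singleton, zero_add]
    by_cases h1 : t = 1 <;> simp [h1, ht.ne']
  · simp only [twoPoint_singleton, hx, if_false, zero_add]
    split_ifs <;> first | (exfalso; linarith) | simp

end TwoPoint

lemma iSup_ge_indicator_singleton {α : Type*} [Preorder α] (a t : α) (c : ℝ≥0∞) :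
    ⨆ (u : α) (_ : t ≤ u), ({a} : Set α).indicator (fun _ => c) u =
      (Set.Iic a).indicator (fun _ => c) t := by
  by_cases hta : t ≤ a
  · rw [Set.indicator_of_mem (Set.mem_Iic.2 hta)]
    exact le_antisymm (iSup₂_le fun u _ => Set.indicator_le_self _ _ u)
      (le_iSup₂_of_le a hta (by simp))
  · rw [Set.indicator_of_notMem (by simpa using hta)]
    refine le_antisymm (iSup₂_le fun u htu => ?_) bot_le
    rw [Set.indicator_of_notMem fun hu => hta (htu.trans_eq (Set.mem_singleton_iff.1 hu))]

lemma lintegral_Ioc_ofReal_half (a : ℝ) (ha : 0 ≤ a) :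
    ∫⁻ t in Set.Ioc 0 a, ENNReal.ofReal (t / 2) = ENNReal.ofReal (a ^ 2 / 4) := by
  have hcont : Continuous fun t : ℝ => t / 2 := by fun_prop
  rw [← ofReal_integral_eq_lintegral_ofReal hcont.integrableOn_Ioc
    ((ae_restrict_mem measurableSet_Ioc).mono fun t ht => div_nonneg ht.1.le zero_le_two),
    ← intervalIntegral.integral_of_le ha, intervalIntegral.integral_div, integral_id]
  ring_nf

lemma setLIntegral_Ioi_mul_indicator_Iic {a : ℝ} (ha : 0 ≤ a) (c : ℝ≥0∞) :
    ∫⁻ t in Set.Ioi 0, ENNReal.ofReal (t / 2) * (Set.Iic a).indicator (fun _ => c) t =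
      ENNReal.ofReal (a ^ 2 / 4) * c := by
  simp_rw [← Set.indicator_mul_right _ (fun t => ENNReal.ofReal (t / 2))]
  rw [lintegral_indicator measurableSet_Iic, Measure.restrict_restrict measurableSet_Iic,
    Set.Iic_inter_Ioi, lintegral_mul_const _ (by fun_prop), lintegral_Ioc_ofReal_half a ha]

/-- **High-noise Ziv–Zakai functional of a Bernoulli input.**
If `X ∼ Ber(p)` with `0 < p < 1`, then `V̄(P_X, 2) = (1/4)·min{p, 1−p}`. -/
theorem bernoulli_high_noise_value
    (p : ℝ) (hp0 : 0 < p) (hp1 : p < 1)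
    (P : Measure ℝ)
    (hP : P = ENNReal.ofReal (1 - p) • Measure.dirac (0 : ℝ) +
        ENNReal.ofReal p • Measure.dirac (1 : ℝ)) :
    Vbar1 P 2 = ENNReal.ofReal (min p (1 - p) / 4) := by
  have hP1 : IsProbabilityMeasure P := ⟨by
    simp [hP, ← ENNReal.ofReal_add (sub_nonneg.2 hp1.le) hp0.le]⟩
  have hgap (u : ℝ) (hu : 0 < u) : 2 - Hfun1 P 2 u =
      ({1} : Set ℝ).indicator (fun _ => ENNReal.ofReal (min p (1 - p))) u := by
    rw [two_sub_Hfun1_eq_sum_min P (hP ▸ twoPoint_compl_eq_zero _ _) u, hP,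
      twoPoint_sum_min_shift _ _ hu, ENNReal.ofReal_min, min_comm]
  have hfill (t : ℝ) (ht : t ∈ Set.Ioi 0) :
      ENNReal.ofReal (t / 2) * ⨆ (u : ℝ) (_ : t ≤ u),
        ((2 : ℕ) - Hfun1 P 2 u) / ((2 : ℕ) - 1 : ℝ≥0∞) =
      ENNReal.ofReal (t / 2) *
        (Set.Iic 1).indicator (fun _ => ENNReal.ofReal (min p (1 - p))) t := by
    rw [← iSup_ge_indicator_singleton]
    congr 1
    refine iSup_congr fun u => iSup_congr fun htu => ?_
    rw [← hgap u (lt_of_lt_of_le ht htu), Nat.cast_ofNat,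
      ENNReal.sub_eq_of_eq_add one_ne_top one_add_one_eq_two.symm, div_one]
  rw [Vbar1, setLIntegral_congr_fun measurableSet_Ioi hfill,
    setLIntegral_Ioi_mul_indicator_Iic zero_le_one, ← ENNReal.ofReal_mul (by norm_num)]
  ring_nf
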